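/- Let C = FLRS[γ, a, h; N, k] be a folded linearized Reed–Solomon code with equal folding parameter h for all blocks and let φ_α be the skew-to-sum-rank isometry X ↦ fold(unfold(X)·diag(β^{−1})) with β the vector of code locator powers of γ. Then the image {φ_α(C) : C ∈ C} equals the folded skew Reed–Solomon code FSRS[b, h; N, k], where b^{(i)} = a_i·(1, α, α², ..., α^{n_i−1}) with α = σ(γ)/γ. -/

import Mathlib

/-- Iterated generalized operator `D_a^r(b)` for zero derivation: `D_a(b) = σ(b)·a`. -/
def Dit {F : Type*} [Field F] (σ : F ≃+* F) (a b : F) : ℕ → F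
  | 0 => b
  | r + 1 => σ (Dit σ a b r) * a

/-- Generalized operator evaluation of a skew polynomial at `b` w.r.t. parameter `a`. -/
noncomputable def opev {F : Type*} [Field F] (σ : F ≃+* F) (f : Polynomial F)
    (a b : F) : F :=
  ∑ r ∈ f.support, f.coeff r * Dit σ a b r

/-- The `i`-th truncated norm `N_i(β) = β·σ(β)···σ^{i−1}(β)`. -/
def Nrm {F : Type*} [Field F] (σ : F ≃+* F) (β : F) (i : ℕ) : F :=
  ∏ t ∈ Finset.range i, (⇑σ)^[t] β

/-- Remainder evaluation of a skew polynomial (zero derivation):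
`f[β] = Σ_i f_i N_i(β)` (Lam–Leroy). -/
noncomputable def remev {F : Type*} [Field F] (σ : F ≃+* F) (f : Polynomial F)
    (β : F) : F :=
  ∑ i ∈ f.support, f.coeff i * Nrm σ β i

/-- The fixed subfield `F_q` of the automorphism `σ`. -/
def fixedSubfield {F : Type*} [Field F] (σ : F ≃+* F) : Subfield F where
  carrier := {x | σ x = x}
  mul_mem' := by
    intro a b (ha : σ a = a) (hb : σ b = b)
    show σ (a * b) = a * b
    rw [map_mul, ha, hb]
  one_mem' := by show σ 1 = 1; simp
  add_mem' := by
    intro a b (ha : σ a = a) (hb : σ b = b)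
    show σ (a + b) = a + b
    rw [map_add, ha, hb]
  zero_mem' := by show σ 0 = 0; simp
  neg_mem' := by
    intro a (ha : σ a = a)
    show σ (-a) = -a
    rw [map_neg, ha]
  inv_mem' := by
    intro a (ha : σ a = a)
    show σ a⁻¹ = a⁻¹
    rw [map_inv₀, ha]

/-!
For `b ≠ 0` the remainder evaluation at the `σ`-conjugate `σ(b)·a·b⁻¹` is the operator evaluation
`f(b)_a` divided by `b`: the truncated norms `N_r(σ(b)·a·b⁻¹)` telescope to `D_a^r(b)·b⁻¹`.
With `b = γʲ` the conjugate is `a·αʲ`, so dividing the `(r, c)` entry of the `i`-th block of an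
FLRS codeword by its code locator `γ^(c·h + r)` gives the FSRS codeword of the same `f`.
-/

section SkewEvaluation

variable {F : Type*} [Field F] (σ : F ≃+* F)

theorem Nrm_succ (β : F) (r : ℕ) : Nrm σ β (r + 1) = β * Nrm σ (σ β) r := by
  simp only [Nrm, Finset.prod_range_succ', Function.iterate_succ_apply, Function.iterate_zero_apply,
    mul_comm]

theorem map_Dit (a b : F) (r : ℕ) : σ (Dit σ a b r) = Dit σ (σ a) (σ b) r := by
  induction r with
  | zero => rfl
  | succ r ih => simp only [Dit, map_mul, ih]

theorem Nrm_conj_eq_Dit_mul_inv (r : ℕ) (a : F) {b : F} (hb : b ≠ 0) :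
    Nrm σ (σ b * a * b⁻¹) r = Dit σ a b r * b⁻¹ := by
  induction r generalizing a b with
  | zero => simp [Nrm, Dit, mul_inv_cancel₀ hb]
  | succ r ih =>
    have hσb : σ b ≠ 0 := (map_ne_zero σ).mpr hb
    have hσconj : σ (σ b * a * b⁻¹) = σ (σ b) * σ a * (σ b)⁻¹ := by
      rw [map_mul, map_mul, map_inv₀]
    rw [Nrm_succ, hσconj, ih (σ a) hσb, ← map_Dit, Dit]
    field_simp

theorem remev_conj_eq_opev_mul_inv (f : Polynomial F) (a : F) {b : F} (hb : b ≠ 0) :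
    remev σ f (σ b * a * b⁻¹) = opev σ f a b * b⁻¹ := by
  rw [remev, opev, Finset.sum_mul]
  exact Finset.sum_congr rfl fun r _ => by rw [Nrm_conj_eq_Dit_mul_inv σ r a hb, mul_assoc]

theorem remev_mul_pow_eq_opev_mul_inv (f : Polynomial F) (a : F) {γ : F} (hγ : γ ≠ 0) (j : ℕ) :
    remev σ f (a * (σ γ * γ⁻¹) ^ j) = opev σ f a (γ ^ j) * (γ ^ j)⁻¹ := by
  have hconj : a * (σ γ * γ⁻¹) ^ j = σ (γ ^ j) * a * (γ ^ j)⁻¹ := by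
    rw [map_pow, mul_pow, inv_pow]
    ring
  rw [hconj, remev_conj_eq_opev_mul_inv σ f a (pow_ne_zero j hγ)]

end SkewEvaluation

theorem stmt_18_general (F : Type*) [Field F] (σ : F ≃+* F)
    (ℓ h k : ℕ)
    (Nv : Fin ℓ → ℕ)
    (γ : F) (hγ0 : γ ≠ 0)
    (a : Fin ℓ → F)
    (α : F) (hα : α = σ γ * γ⁻¹) :
    (fun X : ∀ i : Fin ℓ, Matrix (Fin h) (Fin (Nv i)) F =>
        fun i => Matrix.of fun r c => X i r c * (γ ^ (c.1 * h + r.1))⁻¹) ''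
      {X : ∀ i : Fin ℓ, Matrix (Fin h) (Fin (Nv i)) F |
        ∃ f : Polynomial F, f.degree < (k : ℕ) ∧
          ∀ i r c, X i r c = opev σ f (a i) (γ ^ (c.1 * h + r.1))} =
    {X : ∀ i : Fin ℓ, Matrix (Fin h) (Fin (Nv i)) F |
      ∃ f : Polynomial F, f.degree < (k : ℕ) ∧
        ∀ i r c, X i r c = remev σ f (a i * α ^ (c.1 * h + r.1))} := by
  subst hα
  simp only [remev_mul_pow_eq_opev_mul_inv σ _ _ hγ0]
  ext X
  constructor
  · rintro ⟨Y, ⟨f, hf, hY⟩, rfl⟩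
    exact ⟨f, hf, fun i r c => congrArg (· * _) (hY i r c)⟩
  · rintro ⟨f, hf, hX⟩
    refine ⟨fun i => Matrix.of fun r c => opev σ f (a i) (γ ^ (c.1 * h + r.1)),
      ⟨f, hf, fun i r c => rfl⟩, ?_⟩
    funext i
    ext r c
    exact (hX i r c).symm

/-- The image of a folded linearized Reed–Solomon code (equal folding parameter `h`)
under the skew-to-sum-rank isometry `φ_α` (blockwise entrywise division by the code
locator powers of `γ`) is the corresponding folded skew Reed–Solomon code with
evaluation points `a_i·α^w`, `α = σ(γ)/γ`. -/
theorem stmt_18 (F : Type*) [Field F] [Fintype F] (σ : F ≃+* F)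
    (ℓ h k : ℕ) (hℓ : 0 < ℓ) (hh : 0 < h) (hk : 0 < k)
    (Nv : Fin ℓ → ℕ) (hNpos : ∀ i, 0 < Nv i) (hNh : ∀ i, Nv i ≤ h)
    (hkN : k ≤ h * ∑ i, Nv i)
    (hnm : ∀ i, h * Nv i ≤ Module.finrank (fixedSubfield σ) F)
    (γ : F) (hγ0 : γ ≠ 0) (hprim : ∀ x : F, x ≠ 0 → ∃ j : ℕ, x = γ ^ j)
    (a : Fin ℓ → F) (ha0 : ∀ i, a i ≠ 0)
    (hconj : ∀ i i' : Fin ℓ, i ≠ i' →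
      ¬ ∃ c : F, c ≠ 0 ∧ σ c * a i * c⁻¹ = a i')
    (α : F) (hα : α = σ γ * γ⁻¹) :
    (fun X : ∀ i : Fin ℓ, Matrix (Fin h) (Fin (Nv i)) F =>
        fun i => Matrix.of fun r c => X i r c * (γ ^ (c.1 * h + r.1))⁻¹) ''
      {X : ∀ i : Fin ℓ, Matrix (Fin h) (Fin (Nv i)) F |
        ∃ f : Polynomial F, f.degree < (k : ℕ) ∧
          ∀ i r c, X i r c = opev σ f (a i) (γ ^ (c.1 * h + r.1))} =
    {X : ∀ i : Fin ℓ, Matrix (Fin h) (Fin (Nv i)) F |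
      ∃ f : Polynomial F, f.degree < (k : ℕ) ∧
        ∀ i r c, X i r c = remev σ f (a i * α ^ (c.1 * h + r.1))} :=
  stmt_18_general F σ ℓ h k Nv γ hγ0 a α hα
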